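/- Let ρ : ℝ^{2d} → Mat_{2d}(ℝ) be smooth with ρ(x) η ρ(x)^T = η pointwise, and suppose every entry of ρ depends only on the first d coordinates X^1, …, X^d of ℝ^{2d} (a solution of the strong constraint ∂̃^i = 0). Define the DFT fluxes T̂_{MNP} := 3 η_{IK} ρ^K{}_{[M} ∂^I ρ^L{}_{N} η_{LR} ρ^R{}_{P]}. Then the DFT Bianchi identities hold: 3 η^{MN} T̂_{M[JK} T̂_{IL]N} + 4 ρ^M{}_{[I} ∂_M T̂_{KJL]} = 0, where the square brackets denote weight-one antisymmetrization over the displayed free indices. -/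

import Mathlib

open scoped BigOperators

noncomputable section

/-- Doubled index set: `I = 1,…,2d`, realized as `Fin d ⊕ Fin d`. -/
abbrev DIdx (d : ℕ) := Fin d ⊕ Fin d

/-- The doubled space `ℝ^{2d}`. -/
abbrev DSpace (d : ℕ) := DIdx d → ℝ

/-- The constant O(d,d)-invariant metric `η = ((0,1_d),(1_d,0))`; numerically `η⁻¹ = η`. -/
def eta {d : ℕ} : DIdx d → DIdx d → ℝ
  | Sum.inl i, Sum.inr j => if i = j then 1 else 0
  | Sum.inr i, Sum.inl j => if i = j then 1 else 0
  | _, _ => 0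

/-- Partial derivative `∂_I f (x)`. -/
def pd {d : ℕ} (f : DSpace d → ℝ) (I : DIdx d) (x : DSpace d) : ℝ :=
  fderiv ℝ f x (Pi.single I 1)

/-- Lowered components `A_I := η_{IJ} A^J`. -/
def low {d : ℕ} (A : DSpace d → DSpace d) (I : DIdx d) : DSpace d → ℝ :=
  fun x => ∑ J, eta I J * A x J

/-- Raised derivative `∂^I f := η^{IJ} ∂_J f`. -/
def pdU {d : ℕ} (f : DSpace d → ℝ) (I : DIdx d) (x : DSpace d) : ℝ :=
  ∑ J, eta I J * pd f J x

/-- The flat untwisted C-bracket `[[A,B]]^J := A^K ∂_K B^J − ½ A^K ∂^J B_K − (A ↔ B)`. -/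
def cbC {d : ℕ} (A B : DSpace d → DSpace d) (J : DIdx d) (x : DSpace d) : ℝ :=
  ∑ K, (A x K * pd (fun y => B y J) K x - (1/2) * A x K * pdU (low B K) J x
      - B x K * pd (fun y => A y J) K x + (1/2) * B x K * pdU (low A K) J x)

/-- Weight-one antisymmetrization over three indices. -/
def asym3 {α : Type*} (G : α → α → α → ℝ) (a b c : α) : ℝ :=
  (1/6) * (G a b c - G a c b + G b c a - G b a c + G c a b - G c b a)

/-- The DFT fluxes `T̂_{MNP} := 3 η_{IK} ρ^K{}_{[M} ∂^I ρ^L{}_{N} η_{LR} ρ^R{}_{P]}`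
(weight-one antisymmetrization over `M, N, P`; the index `L` is not antisymmetrized). -/
def dftFlux {d : ℕ} (ρ : DSpace d → DIdx d → DIdx d → ℝ)
    (M N P : DIdx d) (x : DSpace d) : ℝ :=
  3 * asym3 (fun a b c => ∑ I, ∑ K, ∑ L, ∑ R,
      eta I K * ρ x K a * pdU (fun y => ρ y L b) I x * eta L R * ρ x R c) M N P

/-- Weight-one antisymmetrization over four indices. -/
def asym4 {α : Type*} (G : α → α → α → α → ℝ) (a b c e : α) : ℝ :=
  (1/24) * ∑ σ : Equiv.Perm (Fin 4),
    ((Equiv.Perm.sign σ : ℤ) : ℝ) *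
      G (![a,b,c,e] (σ 0)) (![a,b,c,e] (σ 1)) (![a,b,c,e] (σ 2)) (![a,b,c,e] (σ 3))

namespace S11

variable {d : ℕ}

lemma eta_apply (I J : DIdx d) : eta I J = if J = Sum.swap I then (1:ℝ) else 0 := by
  cases I <;> cases J <;> simp [eta, Sum.swap, eq_comm]

lemma eta_apply' (I J : DIdx d) : eta I J = if I = Sum.swap J then (1:ℝ) else 0 := by
  cases I <;> cases J <;> simp [eta, Sum.swap, eq_comm]

lemma sum_eta_mul (I : DIdx d) (g : DIdx d → ℝ) : ∑ J, eta I J * g J = g (Sum.swap I) := by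
  simp [eta_apply, ite_mul]

lemma sum_swap_idx (f : DIdx d → ℝ) : ∑ M, f (Sum.swap M) = ∑ M, f M :=
  Fintype.sum_equiv (Equiv.sumComm _ _) _ _ (fun _ => rfl)

/-- projection onto the first d coordinates -/
def projL : DSpace d →L[ℝ] DSpace d :=
  (LinearMap.pi fun I => match I with
    | .inl i => LinearMap.proj (Sum.inl i : DIdx d)
    | .inr _ => 0).toContinuousLinearMap

@[simp] lemma projL_inl (x : DSpace d) (i : Fin d) : (projL x) (Sum.inl i) = x (Sum.inl i) := rfl
@[simp] lemma projL_inr (x : DSpace d) (i : Fin d) : (projL x) (Sum.inr i) = 0 := rfl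

lemma projL_proj (x : DSpace d) : projL (projL x) = projL x := by
  funext I; cases I <;> simp

lemma projL_single_inr (i : Fin d) : projL (Pi.single (Sum.inr i : DIdx d) (1:ℝ)) = 0 := by
  funext I; cases I with
  | inl j => simp [Pi.single_eq_of_ne (by simp : (Sum.inl j : DIdx d) ≠ Sum.inr i)]
  | inr j => simp

/-- "Good" functions: smooth and depending only on the first d coordinates. -/
structure Sm (f : DSpace d → ℝ) : Prop where
  smooth : ContDiff ℝ (⊤ : ℕ∞) f
  inv : ∀ x, f (projL x) = f x

lemma Sm.diffAt {f : DSpace d → ℝ} (hf : Sm f) (x : DSpace d) : DifferentiableAt ℝ f x :=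
  (hf.smooth.differentiable (by simp)).differentiableAt

lemma Sm.fderiv_eq {f : DSpace d → ℝ} (hf : Sm f) (x : DSpace d) :
    fderiv ℝ f x = (fderiv ℝ f (projL x)).comp (projL : DSpace d →L[ℝ] DSpace d) := by
  have h : f = fun y => f (projL y) := by funext y; rw [hf.inv]
  conv_lhs => rw [h]
  rw [show (fun y => f (projL y)) = f ∘ (projL : DSpace d →L[ℝ] DSpace d) from rfl]
  rw [fderiv_comp x (hf.diffAt _) (projL.differentiableAt)]
  rw [ContinuousLinearMap.fderiv]

lemma Sm.pd_inr {f : DSpace d → ℝ} (hf : Sm f) (i : Fin d) (x : DSpace d) :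
    pd f (Sum.inr i) x = 0 := by
  rw [pd, hf.fderiv_eq]
  simp [projL_single_inr]

lemma Sm.pd {f : DSpace d → ℝ} (hf : Sm f) (I : DIdx d) : Sm (pd f I) := by
  constructor
  · exact (hf.smooth.fderiv_right (by simp)).clm_apply contDiff_const
  · intro x
    show fderiv ℝ f (projL x) (Pi.single I 1) = fderiv ℝ f x (Pi.single I 1)
    rw [hf.fderiv_eq x, hf.fderiv_eq (projL x), projL_proj]
    simp [projL_proj]

lemma Sm.const (c : ℝ) : Sm (fun _ : DSpace d => c) := ⟨contDiff_const, fun _ => rfl⟩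

lemma Sm.add {f g : DSpace d → ℝ} (hf : Sm f) (hg : Sm g) : Sm (fun y => f y + g y) :=
  ⟨hf.smooth.add hg.smooth, fun x => by simp [hf.inv, hg.inv]⟩

lemma Sm.mul {f g : DSpace d → ℝ} (hf : Sm f) (hg : Sm g) : Sm (fun y => f y * g y) :=
  ⟨hf.smooth.mul hg.smooth, fun x => by simp [hf.inv, hg.inv]⟩

lemma Sm.sum {ι : Type*} (s : Finset ι) (f : ι → DSpace d → ℝ) (h : ∀ i ∈ s, Sm (f i)) :
    Sm (fun y => ∑ i ∈ s, f i y) := by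
  classical
  induction s using Finset.induction with
  | empty => simpa using Sm.const 0
  | @insert a s ha ih =>
    simp only [Finset.sum_insert ha]
    exact (h a (by simp)).add (ih (fun i hi => h i (by simp [hi])))

lemma pd_add {f g : DSpace d → ℝ} {x : DSpace d} (hf : DifferentiableAt ℝ f x)
    (hg : DifferentiableAt ℝ g x) (I : DIdx d) :
    pd (fun y => f y + g y) I x = pd f I x + pd g I x := by
  simp [pd, fderiv_fun_add hf hg]

lemma pd_mul {f g : DSpace d → ℝ} {x : DSpace d} (hf : DifferentiableAt ℝ f x)
    (hg : DifferentiableAt ℝ g x) (I : DIdx d) :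
    pd (fun y => f y * g y) I x = pd f I x * g x + f x * pd g I x := by
  simp [pd, fderiv_fun_mul hf hg]; ring

lemma pd_sum {ι : Type*} (s : Finset ι) (f : ι → DSpace d → ℝ) {x : DSpace d}
    (h : ∀ i ∈ s, DifferentiableAt ℝ (f i) x) (I : DIdx d) :
    pd (fun y => ∑ i ∈ s, f i y) I x = ∑ i ∈ s, pd (f i) I x := by
  simp [pd, fderiv_fun_sum h]

lemma pd_const (c : ℝ) (I : DIdx d) (x : DSpace d) : pd (fun _ => c) I x = 0 := by
  simp [pd]

lemma pd_comm {f : DSpace d → ℝ} (hf : ContDiff ℝ (⊤ : ℕ∞) f) (I J : DIdx d) (x : DSpace d) :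
    pd (fun y => pd f I y) J x = pd (fun y => pd f J y) I x := by
  have hdf : Differentiable ℝ (fderiv ℝ f) := (hf.fderiv_right (m := 1) (WithTop.coe_le_coe.mpr le_top)).differentiable (by simp)
  have hsym := second_derivative_symmetric (f' := fderiv ℝ f)
    (fun y => (hf.differentiable (by simp) y).hasFDerivAt) (hdf x).hasFDerivAt
  show pd (fun y => fderiv ℝ f y (Pi.single I 1)) J x = pd (fun y => fderiv ℝ f y (Pi.single J 1)) I x
  rw [pd, pd, fderiv_clm_apply (hdf x) (differentiableAt_const _),
    fderiv_clm_apply (hdf x) (differentiableAt_const _)]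
  simp [hsym (Pi.single J 1) (Pi.single I 1)]

/-- strong-constraint pairing -/
lemma sc_pair {f g : DSpace d → ℝ} (hf : Sm f) (hg : Sm g) (x : DSpace d) :
    ∑ M, pd f M x * pd g (Sum.swap M) x = 0 := by
  rw [Fintype.sum_sum_type]
  simp [Sum.swap, hf.pd_inr, hg.pd_inr]

end S11

namespace S11

variable {d : ℕ} (ρ : DSpace d → DIdx d → DIdx d → ℝ)

/-- `W_{M A B} := (∂_M ρ^L{}_A) ρ_{L B}` (η contracted away). -/
def Wf (M A B : DIdx d) (x : DSpace d) : ℝ :=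
  ∑ L, pd (fun y => ρ y L A) M x * ρ x (Sum.swap L) B

/-- `Ω_{A B C} := ρ^M{}_A W_{M B C}`. -/
def Omf (A B C : DIdx d) (x : DSpace d) : ℝ :=
  ∑ M, ρ x M A * Wf ρ M B C x

variable (hρs : ∀ K J : DIdx d, ContDiff ℝ (⊤ : ℕ∞) fun x => ρ x K J)
  (hη : ∀ (x : DSpace d) (K L : DIdx d),
      ∑ I, ∑ J, ρ x K I * eta I J * ρ x L J = eta K L)
  (hsc : ∀ x y : DSpace d, (∀ i : Fin d, x (Sum.inl i) = y (Sum.inl i)) → ρ x = ρ y)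

section
include hρs hsc

lemma Sm_rho (L A : DIdx d) : Sm (fun y => ρ y L A) := by
  refine ⟨hρs L A, fun x => ?_⟩
  have := hsc (projL x) x (fun i => rfl)
  simp [this]

lemma Sm_W (M A B : DIdx d) : Sm (fun x => Wf ρ M A B x) := by
  refine Sm.sum _ _ (fun L _ => ?_)
  exact ((Sm_rho ρ hρs hsc L A).pd M).mul (Sm_rho ρ hρs hsc (Sum.swap L) B)

lemma Sm_Om (A B C : DIdx d) : Sm (fun x => Omf ρ A B C x) := by
  refine Sm.sum _ _ (fun M _ => ?_)
  exact (Sm_rho ρ hρs hsc M A).mul (Sm_W ρ hρs hsc M B C)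

end

include hη in
/-- contracted form of `ρ η ρᵀ = η` -/
lemma c1 (x : DSpace d) (K L : DIdx d) :
    ∑ I, ρ x K I * ρ x L (Sum.swap I) = eta K L := by
  rw [← hη x K L]
  refine Finset.sum_congr rfl (fun I _ => ?_)
  rw [← sum_eta_mul I (fun J => ρ x L J), Finset.mul_sum]
  exact Finset.sum_congr rfl fun J _ => by ring

include hη in
/-- transposed orthogonality `ρᵀ η ρ = η`, contracted. -/
lemma c2 (x : DSpace d) (A B : DIdx d) :
    ∑ M, ρ x M A * ρ x (Sum.swap M) B = eta A B := by
  classical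
  set m : Matrix (DIdx d) (DIdx d) ℝ := Matrix.of (fun M N => ρ x M N) with hm
  set E : Matrix (DIdx d) (DIdx d) ℝ := Matrix.of (fun I J => eta I J) with hE
  have hswapinj : Function.Injective (Sum.swap : DIdx d → DIdx d) :=
    Function.Involutive.injective (fun I => Sum.swap_swap I)
  have hEE : E * E = 1 := by
    ext I K
    simp only [Matrix.mul_apply, hE, Matrix.of_apply, Matrix.one_apply]
    rw [show (∑ J, eta I J * eta J K) = eta (Sum.swap I) K from sum_eta_mul I (fun J => eta J K)]
    rw [eta_apply']
    by_cases h : I = K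
    · subst h; simp
    · rw [if_neg (fun hh => h (hswapinj hh)), if_neg h]
  have h1 : m * E * m.transpose = E := by
    ext K L
    simp only [Matrix.mul_apply, Matrix.transpose_apply, hm, hE, Matrix.of_apply,
      Finset.sum_mul]
    rw [← hη x K L]
    rw [Finset.sum_comm]
  have h2 : m * (E * m.transpose * E) = 1 := by
    rw [← Matrix.mul_assoc, ← Matrix.mul_assoc, h1, hEE]
  have h3 : E * m.transpose * E * m = 1 := mul_eq_one_comm.mp h2
  have h4 : m.transpose * (E * m) = E := by
    calc m.transpose * (E * m) = 1 * (m.transpose * (E * m)) := by rw [Matrix.one_mul]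
      _ = (E * E) * (m.transpose * (E * m)) := by rw [hEE]
      _ = E * (E * m.transpose * E * m) := by simp only [Matrix.mul_assoc]
      _ = E := by rw [h3, Matrix.mul_one]
  have h5 : (m.transpose * (E * m)) A B = E A B := by rw [h4]
  simp only [Matrix.mul_apply, Matrix.transpose_apply, hm, hE, Matrix.of_apply] at h5
  rw [← h5]
  refine Finset.sum_congr rfl (fun M _ => ?_)
  rw [show (∑ N, eta M N * ρ x N B) = ρ x (Sum.swap M) B from sum_eta_mul M _]

include hρs hη hsc in
/-- antisymmetry `W_{M A B} = − W_{M B A}` -/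
lemma W_antisym (x : DSpace d) (N A B : DIdx d) :
    Wf ρ N A B x + Wf ρ N B A x = 0 := by
  have hconst : (fun y => ∑ M, ρ y M A * ρ y (Sum.swap M) B) = fun _ => eta A B := by
    funext y; exact c2 ρ hη y A B
  have hz : pd (fun y => ∑ M, ρ y M A * ρ y (Sum.swap M) B) N x = 0 := by
    rw [hconst, pd_const]
  rw [pd_sum _ _ (fun M _ => ((Sm_rho ρ hρs hsc M A).mul
      (Sm_rho ρ hρs hsc (Sum.swap M) B)).diffAt x) N] at hz
  have hexp : ∀ M : DIdx d, pd (fun y => ρ y M A * ρ y (Sum.swap M) B) N x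
      = pd (fun y => ρ y M A) N x * ρ x (Sum.swap M) B
        + ρ x M A * pd (fun y => ρ y (Sum.swap M) B) N x :=
    fun M => pd_mul ((Sm_rho ρ hρs hsc M A).diffAt x)
      ((Sm_rho ρ hρs hsc (Sum.swap M) B).diffAt x) N
  simp only [hexp, Finset.sum_add_distrib] at hz
  rw [← hz, Wf, Wf]
  congr 1
  rw [← sum_swap_idx (fun M => ρ x M A * pd (fun y => ρ y (Sum.swap M) B) N x)]
  refine Finset.sum_congr rfl (fun M _ => ?_)
  rw [Sum.swap_swap]
  ring

include hρs hη hsc in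
lemma Om_antisym (x : DSpace d) (A B C : DIdx d) :
    Omf ρ A C B x = - Omf ρ A B C x := by
  rw [Omf, Omf, ← Finset.sum_neg_distrib]
  refine Finset.sum_congr rfl (fun M _ => ?_)
  have h := W_antisym ρ hρs hη hsc x M B C
  have h2 : Wf ρ M C B x = - Wf ρ M B C x := by linarith
  rw [h2]; ring

end S11

namespace S11

variable {d : ℕ} (ρ : DSpace d → DIdx d → DIdx d → ℝ)
variable (hρs : ∀ K J : DIdx d, ContDiff ℝ (⊤ : ℕ∞) fun x => ρ x K J)
  (hη : ∀ (x : DSpace d) (K L : DIdx d),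
      ∑ I, ∑ J, ρ x K I * eta I J * ρ x L J = eta K L)
  (hsc : ∀ x y : DSpace d, (∀ i : Fin d, x (Sum.inl i) = y (Sum.inl i)) → ρ x = ρ y)

lemma pdU_eq (f : DSpace d → ℝ) (I : DIdx d) (x : DSpace d) :
    pdU f I x = pd f (Sum.swap I) x := sum_eta_mul I _

include hη in
/-- `∂_M ρ^L{}_C = W_{M C}{}^E ρ^L{}_E` -/
lemma pdrho_eq (x : DSpace d) (L C M : DIdx d) :
    pd (fun y => ρ y L C) M x = ∑ E, Wf ρ M C E x * ρ x L (Sum.swap E) := by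
  have h1 : ∀ E : DIdx d, Wf ρ M C E x * ρ x L (Sum.swap E)
      = ∑ L' : DIdx d, pd (fun y => ρ y L' C) M x * (ρ x (Sum.swap L') E * ρ x L (Sum.swap E)) := by
    intro E
    rw [Wf, Finset.sum_mul]
    exact Finset.sum_congr rfl fun L' _ => by ring
  simp only [h1]
  rw [Finset.sum_comm]
  have h2 : ∀ L' : DIdx d,
      (∑ E : DIdx d, pd (fun y => ρ y L' C) M x * (ρ x (Sum.swap L') E * ρ x L (Sum.swap E)))
      = pd (fun y => ρ y L' C) M x * eta (Sum.swap L') L := by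
    intro L'
    rw [← c1 ρ hη x (Sum.swap L') L, Finset.mul_sum]
  simp only [h2]
  have h3 : ∀ L' : DIdx d, eta (Sum.swap L') L = if L' = L then (1:ℝ) else 0 := by
    intro L'
    rw [eta_apply, Sum.swap_swap]
    simp [eq_comm]
  simp [h3]

include hρs hη hsc in
/-- strong-constraint contraction of two `W`'s -/
lemma sc_W (x : DSpace d) (A B C D : DIdx d) :
    ∑ N, Wf ρ N A B x * Wf ρ (Sum.swap N) C D x = 0 := by
  have expand : ∀ N : DIdx d, Wf ρ N A B x * Wf ρ (Sum.swap N) C D x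
      = ∑ L, ∑ L', (ρ x (Sum.swap L) B * ρ x (Sum.swap L') D) *
          (pd (fun y => ρ y L A) N x * pd (fun y => ρ y L' C) (Sum.swap N) x) := by
    intro N
    rw [Wf, Wf, Finset.sum_mul_sum]
    exact Finset.sum_congr rfl fun L _ => Finset.sum_congr rfl fun L' _ => by ring
  simp only [expand]
  rw [Finset.sum_comm]
  refine Finset.sum_eq_zero fun L _ => ?_
  rw [Finset.sum_comm]
  refine Finset.sum_eq_zero fun L' _ => ?_
  rw [← Finset.mul_sum, sc_pair (Sm_rho ρ hρs hsc L A) (Sm_rho ρ hρs hsc L' C) x, mul_zero]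

include hρs hη hsc in
/-- strong-constraint contraction of two `Ω`'s on their first index -/
lemma sc_Om (x : DSpace d) (A B C D : DIdx d) :
    ∑ M, Omf ρ M A B x * Omf ρ (Sum.swap M) C D x = 0 := by
  have step1 : ∀ M : DIdx d, Omf ρ M A B x * Omf ρ (Sum.swap M) C D x
      = ∑ N, ∑ N', (Wf ρ N A B x * Wf ρ N' C D x) * (ρ x N M * ρ x N' (Sum.swap M)) := by
    intro M
    rw [Omf, Omf, Finset.sum_mul_sum]
    exact Finset.sum_congr rfl fun N _ => Finset.sum_congr rfl fun N' _ => by ring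
  simp only [step1]
  rw [Finset.sum_comm]
  have step2 : ∀ N : DIdx d,
      (∑ M : DIdx d, ∑ N' : DIdx d,
        (Wf ρ N A B x * Wf ρ N' C D x) * (ρ x N M * ρ x N' (Sum.swap M)))
      = ∑ N', (Wf ρ N A B x * Wf ρ N' C D x) * eta N N' := by
    intro N
    rw [Finset.sum_comm]
    refine Finset.sum_congr rfl fun N' _ => ?_
    rw [← c1 ρ hη x N N', Finset.mul_sum]
  simp only [step2]
  have step3 : ∀ N : DIdx d, (∑ N', (Wf ρ N A B x * Wf ρ N' C D x) * eta N N')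
      = Wf ρ N A B x * Wf ρ (Sum.swap N) C D x := by
    intro N
    simp [eta_apply, mul_ite]
  simp only [step3]
  exact sc_W ρ hρs hη hsc x A B C D

/-- the inner (un-antisymmetrized) expression of `dftFlux` equals `Ω` -/
lemma inner_eq (x : DSpace d) (a b c : DIdx d) :
    (∑ I, ∑ K, ∑ L, ∑ R, eta I K * ρ x K a * pdU (fun y => ρ y L b) I x * eta L R * ρ x R c)
      = Omf ρ a b c x := by
  have hR : ∀ (I K L : DIdx d),
      (∑ R, eta I K * ρ x K a * pdU (fun y => ρ y L b) I x * eta L R * ρ x R c)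
      = eta I K * (ρ x K a * pd (fun y => ρ y L b) (Sum.swap I) x * ρ x (Sum.swap L) c) := by
    intro I K L
    rw [show (∑ R, eta I K * ρ x K a * pdU (fun y => ρ y L b) I x * eta L R * ρ x R c)
        = ∑ R, eta L R * ((eta I K * ρ x K a * pdU (fun y => ρ y L b) I x) * ρ x R c)
      from Finset.sum_congr rfl fun R _ => by ring]
    rw [show (∑ R, eta L R * ((eta I K * ρ x K a * pdU (fun y => ρ y L b) I x) * ρ x R c))
        = (eta I K * ρ x K a * pdU (fun y => ρ y L b) I x) * ρ x (Sum.swap L) c by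
      rw [← sum_eta_mul L (fun R => (eta I K * ρ x K a * pdU (fun y => ρ y L b) I x) * ρ x R c)]]
    rw [pdU_eq]
    ring
  simp only [hR]
  have hK : ∀ I : DIdx d,
      (∑ K, ∑ L, eta I K * (ρ x K a * pd (fun y => ρ y L b) (Sum.swap I) x * ρ x (Sum.swap L) c))
      = ∑ L, ρ x (Sum.swap I) a * pd (fun y => ρ y L b) (Sum.swap I) x * ρ x (Sum.swap L) c := by
    intro I
    rw [show (∑ K, ∑ L, eta I K * (ρ x K a * pd (fun y => ρ y L b) (Sum.swap I) x * ρ x (Sum.swap L) c))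
        = ∑ K, eta I K * (∑ L, ρ x K a * pd (fun y => ρ y L b) (Sum.swap I) x * ρ x (Sum.swap L) c)
      from Finset.sum_congr rfl fun K _ => by rw [Finset.mul_sum]]
    rw [sum_eta_mul I (fun K => ∑ L, ρ x K a * pd (fun y => ρ y L b) (Sum.swap I) x * ρ x (Sum.swap L) c)]
  simp only [hK]
  rw [sum_swap_idx (fun I => ∑ L, ρ x I a * pd (fun y => ρ y L b) I x * ρ x (Sum.swap L) c)]
  rw [Omf]
  refine Finset.sum_congr rfl fun M _ => ?_
  rw [Wf, Finset.mul_sum]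
  exact Finset.sum_congr rfl fun L _ => by ring

include hρs hη hsc in
lemma flux_eq (x : DSpace d) (A B C : DIdx d) :
    dftFlux ρ A B C x = Omf ρ A B C x + Omf ρ B C A x + Omf ρ C A B x := by
  rw [dftFlux, asym3]
  simp only [inner_eq ρ x]
  have h1 := Om_antisym ρ hρs hη hsc x A B C
  have h2 := Om_antisym ρ hρs hη hsc x B C A
  have h3 := Om_antisym ρ hρs hη hsc x C A B
  rw [h1, h2, h3]
  ring

end S11

namespace S11

lemma vec4_apply {α : Type*} (w : Fin 4 → α) (i : Fin 4) : ![w 0, w 1, w 2, w 3] i = w i := by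
  fin_cases i <;> rfl

lemma sign_mul_self (τ : Equiv.Perm (Fin 4)) :
    ((Equiv.Perm.sign τ : ℤ) : ℝ) * ((Equiv.Perm.sign τ : ℤ) : ℝ) = 1 := by
  rcases Int.units_eq_one_or (Equiv.Perm.sign τ) with h | h <;> rw [h] <;> norm_num

lemma asym4_pattern {α : Type*} (G : α → α → α → α → ℝ) (τ : Equiv.Perm (Fin 4)) (a b c e : α) :
    asym4 (fun x0 x1 x2 x3 => G (![x0,x1,x2,x3] (τ 0)) (![x0,x1,x2,x3] (τ 1))
        (![x0,x1,x2,x3] (τ 2)) (![x0,x1,x2,x3] (τ 3))) a b c e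
      = ((Equiv.Perm.sign τ : ℤ) : ℝ) * asym4 G a b c e := by
  rw [asym4, asym4]
  conv_rhs => rw [mul_left_comm, Finset.mul_sum]
  congr 1
  refine Fintype.sum_equiv (Equiv.mulRight τ) _ _ (fun σ => ?_)
  have hv : ∀ i : Fin 4, ![(![a,b,c,e]) (σ 0), (![a,b,c,e]) (σ 1), (![a,b,c,e]) (σ 2),
      (![a,b,c,e]) (σ 3)] i = ![a,b,c,e] (σ i) := fun i => vec4_apply (fun j => ![a,b,c,e] (σ j)) i
  simp only [Equiv.coe_mulRight, hv, Equiv.Perm.mul_apply, Equiv.Perm.sign_mul, Units.val_mul,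
    Int.cast_mul]
  rw [show ((Equiv.Perm.sign τ : ℤ) : ℝ) * (((Equiv.Perm.sign σ : ℤ) : ℝ) * ((Equiv.Perm.sign τ : ℤ) : ℝ)
        * G (![a,b,c,e] (σ (τ 0))) (![a,b,c,e] (σ (τ 1))) (![a,b,c,e] (σ (τ 2))) (![a,b,c,e] (σ (τ 3))))
      = (((Equiv.Perm.sign τ : ℤ) : ℝ) * ((Equiv.Perm.sign τ : ℤ) : ℝ)) * (((Equiv.Perm.sign σ : ℤ) : ℝ)
        * G (![a,b,c,e] (σ (τ 0))) (![a,b,c,e] (σ (τ 1))) (![a,b,c,e] (σ (τ 2))) (![a,b,c,e] (σ (τ 3)))) by ring,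
    sign_mul_self, one_mul]

lemma asym4_points {α : Type*} (G : α → α → α → α → ℝ) (τ : Equiv.Perm (Fin 4)) (v : Fin 4 → α) :
    asym4 G (v (τ 0)) (v (τ 1)) (v (τ 2)) (v (τ 3))
      = ((Equiv.Perm.sign τ : ℤ) : ℝ) * asym4 G (v 0) (v 1) (v 2) (v 3) := by
  rw [asym4, asym4]
  conv_rhs => rw [mul_left_comm, Finset.mul_sum]
  congr 1
  refine Fintype.sum_equiv (Equiv.mulLeft τ) _ _ (fun σ => ?_)
  have hv : ∀ i : Fin 4, ![v (τ 0), v (τ 1), v (τ 2), v (τ 3)] i = v (τ i) :=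
    fun i => vec4_apply (fun j => v (τ j)) i
  have hv' : ∀ i : Fin 4, ![v 0, v 1, v 2, v 3] i = v i := fun i => vec4_apply v i
  simp only [Equiv.coe_mulLeft, hv, hv', Equiv.Perm.mul_apply, Equiv.Perm.sign_mul,
    Units.val_mul, Int.cast_mul]
  rw [show ((Equiv.Perm.sign τ : ℤ) : ℝ) * (((Equiv.Perm.sign τ : ℤ) : ℝ) * ((Equiv.Perm.sign σ : ℤ) : ℝ)
        * G (v (τ (σ 0))) (v (τ (σ 1))) (v (τ (σ 2))) (v (τ (σ 3))))
      = (((Equiv.Perm.sign τ : ℤ) : ℝ) * ((Equiv.Perm.sign τ : ℤ) : ℝ)) * (((Equiv.Perm.sign σ : ℤ) : ℝ)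
        * G (v (τ (σ 0))) (v (τ (σ 1))) (v (τ (σ 2))) (v (τ (σ 3)))) by ring,
    sign_mul_self, one_mul]

lemma asym4_add {α : Type*} (G H : α → α → α → α → ℝ) (a b c e : α) :
    asym4 (fun p q r s => G p q r s + H p q r s) a b c e
      = asym4 G a b c e + asym4 H a b c e := by
  simp only [asym4, mul_add, Finset.sum_add_distrib]

lemma asym4_sub {α : Type*} (G H : α → α → α → α → ℝ) (a b c e : α) :
    asym4 (fun p q r s => G p q r s - H p q r s) a b c e
      = asym4 G a b c e - asym4 H a b c e := by
  simp only [asym4, mul_sub, Finset.sum_sub_distrib]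

/-- an asym4 of a function symmetric in its first two arguments vanishes -/
lemma asym4_symm_zero {α : Type*} (G : α → α → α → α → ℝ)
    (hsymm : ∀ p q r s, G p q r s = G q p r s) (a b c e : α) :
    asym4 G a b c e = 0 := by
  have h := asym4_pattern G (Equiv.swap 0 1) a b c e
  have hG : (fun x0 x1 x2 x3 => G (![x0,x1,x2,x3] ((Equiv.swap (0:Fin 4) 1) 0))
      (![x0,x1,x2,x3] ((Equiv.swap (0:Fin 4) 1) 1)) (![x0,x1,x2,x3] ((Equiv.swap (0:Fin 4) 1) 2))
      (![x0,x1,x2,x3] ((Equiv.swap (0:Fin 4) 1) 3))) = G := by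
    funext p q r s
    rw [Equiv.swap_apply_left, Equiv.swap_apply_right,
      Equiv.swap_apply_of_ne_of_ne (by decide) (by decide),
      Equiv.swap_apply_of_ne_of_ne (by decide) (by decide)]
    exact (hsymm p q r s).symm
  rw [hG] at h
  rw [Equiv.Perm.sign_swap (by decide)] at h
  simp at h
  linarith

end S11

namespace S11

variable {d : ℕ} (ρ : DSpace d → DIdx d → DIdx d → ℝ) (x : DSpace d)

/-- `P_{abce} := Ω_{ab}{}^E Ω_{Ece}` -/
def Pm (a b c e : DIdx d) : ℝ := ∑ E, Omf ρ a b E x * Omf ρ (Sum.swap E) c e x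

/-- `Q_{abce} := Ω_{abE} Ω_{ce}{}^E` -/
def Qm (a b c e : DIdx d) : ℝ := ∑ E, Omf ρ a b E x * Omf ρ c e (Sum.swap E) x

/-- second-derivative term -/
def S2 (a b c e : DIdx d) : ℝ :=
  ∑ M, ∑ N, ∑ L, (ρ x M a * ρ x N b) *
    (pd (fun y => pd (fun z => ρ z L c) N y) M x * ρ x (Sum.swap L) e)

lemma Pm_def (a b c e : DIdx d) :
    Pm ρ x a b c e = ∑ E, Omf ρ a b E x * Omf ρ (Sum.swap E) c e x := rfl

lemma Qm_def (a b c e : DIdx d) :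
    Qm ρ x a b c e = ∑ E, Omf ρ a b E x * Omf ρ c e (Sum.swap E) x := rfl

lemma S2_def (a b c e : DIdx d) :
    S2 ρ x a b c e = ∑ M, ∑ N, ∑ L, (ρ x M a * ρ x N b) *
      (pd (fun y => pd (fun z => ρ z L c) N y) M x * ρ x (Sum.swap L) e) := rfl

lemma swap_pair (f g : DIdx d → ℝ) :
    ∑ M, f M * g (Sum.swap M) = ∑ M, g M * f (Sum.swap M) := by
  have h := sum_swap_idx (fun M => g M * f (Sum.swap M))
  simp only [Sum.swap_swap] at h
  rw [← h]
  exact Finset.sum_congr rfl fun M _ => mul_comm _ _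

variable (hρs : ∀ K J : DIdx d, ContDiff ℝ (⊤ : ℕ∞) fun x => ρ x K J)
  (hη : ∀ (x : DSpace d) (K L : DIdx d),
      ∑ I, ∑ J, ρ x K I * eta I J * ρ x L J = eta K L)
  (hsc : ∀ x y : DSpace d, (∀ i : Fin d, x (Sum.inl i) = y (Sum.inl i)) → ρ x = ρ y)

include hρs hη hsc in
lemma F1_eq (a b c e : DIdx d) :
    (∑ M, ∑ N, eta M N * dftFlux ρ M a b x * dftFlux ρ c e N x)
    = Pm ρ x c e a b - Pm ρ x e c a b + Qm ρ x a b c e - Qm ρ x a b e c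
      + Pm ρ x a b c e - Qm ρ x b a c e + Qm ρ x b a e c - Pm ρ x b a c e := by
  have step0 : ∀ M : DIdx d, (∑ N, eta M N * dftFlux ρ M a b x * dftFlux ρ c e N x)
      = dftFlux ρ M a b x * dftFlux ρ c e (Sum.swap M) x := by
    intro M
    rw [show (∑ N, eta M N * dftFlux ρ M a b x * dftFlux ρ c e N x)
        = ∑ N, eta M N * (dftFlux ρ M a b x * dftFlux ρ c e N x) from
      Finset.sum_congr rfl fun N _ => by ring,
      sum_eta_mul M (fun N => dftFlux ρ M a b x * dftFlux ρ c e N x)]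
  simp only [step0]
  have step1 : ∀ M : DIdx d, dftFlux ρ M a b x * dftFlux ρ c e (Sum.swap M) x =
      Omf ρ M a b x * Omf ρ c e (Sum.swap M) x
      - Omf ρ M a b x * Omf ρ e c (Sum.swap M) x
      + Omf ρ M a b x * Omf ρ (Sum.swap M) c e x
      + Omf ρ a b M x * Omf ρ c e (Sum.swap M) x
      - Omf ρ a b M x * Omf ρ e c (Sum.swap M) x
      + Omf ρ a b M x * Omf ρ (Sum.swap M) c e x
      - Omf ρ b a M x * Omf ρ c e (Sum.swap M) x
      + Omf ρ b a M x * Omf ρ e c (Sum.swap M) x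
      - Omf ρ b a M x * Omf ρ (Sum.swap M) c e x := by
    intro M
    rw [flux_eq ρ hρs hη hsc x M a b, flux_eq ρ hρs hη hsc x c e (Sum.swap M),
      Om_antisym ρ hρs hη hsc x b a M, Om_antisym ρ hρs hη hsc x e c (Sum.swap M)]
    ring
  simp only [step1]
  simp only [Finset.sum_add_distrib, Finset.sum_sub_distrib]
  have hPm : ∀ p q r s : DIdx d,
      (∑ M, Omf ρ M p q x * Omf ρ r s (Sum.swap M) x) = Pm ρ x r s p q := by
    intro p q r s
    rw [swap_pair (fun M => Omf ρ M p q x) (fun M => Omf ρ r s M x), Pm_def]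
  rw [hPm a b c e, hPm a b e c, sc_Om ρ hρs hη hsc x a b c e,
    ← Qm_def ρ x a b c e, ← Qm_def ρ x a b e c,
    ← Qm_def ρ x b a c e, ← Qm_def ρ x b a e c, ← Pm_def ρ x a b c e, ← Pm_def ρ x b a c e]
  ring

end S11

namespace S11

variable {d : ℕ} (ρ : DSpace d → DIdx d → DIdx d → ℝ) (x : DSpace d)
variable (hρs : ∀ K J : DIdx d, ContDiff ℝ (⊤ : ℕ∞) fun x => ρ x K J)
  (hη : ∀ (x : DSpace d) (K L : DIdx d),
      ∑ I, ∑ J, ρ x K I * eta I J * ρ x L J = eta K L)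
  (hsc : ∀ x y : DSpace d, (∀ i : Fin d, x (Sum.inl i) = y (Sum.inl i)) → ρ x = ρ y)

include hη in
/-- core: contracted product of two first derivatives of `ρ` -/
lemma pdpd (B C M N : DIdx d) :
    (∑ L, pd (fun z => ρ z L B) N x * pd (fun y => ρ y (Sum.swap L) C) M x)
      = ∑ E, Wf ρ N B E x * Wf ρ M C (Sum.swap E) x := by
  have h1 : ∀ L : DIdx d, pd (fun z => ρ z L B) N x * pd (fun y => ρ y (Sum.swap L) C) M x
      = ∑ E, ∑ F, (Wf ρ N B E x * Wf ρ M C F x) *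
          (ρ x L (Sum.swap E) * ρ x (Sum.swap L) (Sum.swap F)) := by
    intro L
    rw [pdrho_eq ρ hη x L B N, pdrho_eq ρ hη x (Sum.swap L) C M, Finset.sum_mul_sum]
    exact Finset.sum_congr rfl fun E _ => Finset.sum_congr rfl fun F _ => by ring
  simp only [h1]
  rw [Finset.sum_comm]
  refine Finset.sum_congr rfl fun E _ => ?_
  rw [Finset.sum_comm]
  have h2 : ∀ F : DIdx d, (∑ L, (Wf ρ N B E x * Wf ρ M C F x) *
      (ρ x L (Sum.swap E) * ρ x (Sum.swap L) (Sum.swap F)))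
      = (Wf ρ N B E x * Wf ρ M C F x) * eta (Sum.swap E) (Sum.swap F) := by
    intro F
    rw [← c2 ρ hη x (Sum.swap E) (Sum.swap F), Finset.mul_sum]
  simp only [h2]
  have h3 : ∀ F : DIdx d, eta (Sum.swap E) (Sum.swap F) = if F = Sum.swap E then (1:ℝ) else 0 := by
    intro F
    rw [eta_apply, Sum.swap_swap]
    by_cases h : F = Sum.swap E
    · subst h; simp
    · rw [if_neg (fun hh => h (by rw [← Sum.swap_swap F, hh])), if_neg h]
  simp [h3, mul_ite]

include hρs hη hsc in
/-- expansion of `D_a Ω_{ABC}` -/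
lemma DOm (a A B C : DIdx d) :
    (∑ M, ρ x M a * pd (fun y => Omf ρ A B C y) M x)
      = Pm ρ x a A B C + S2 ρ x a A B C + Qm ρ x A B a C := by
  have hpdOm : ∀ M : DIdx d, pd (fun y => Omf ρ A B C y) M x
      = ∑ N, (pd (fun y => ρ y N A) M x * Wf ρ N B C x
            + ρ x N A * pd (fun y => Wf ρ N B C y) M x) := by
    intro M
    rw [show (fun y => Omf ρ A B C y) = fun y => ∑ N, ρ y N A * Wf ρ N B C y from rfl]
    rw [pd_sum _ _ (fun N _ => ((Sm_rho ρ hρs hsc N A).mul (Sm_W ρ hρs hsc N B C)).diffAt x) M]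
    exact Finset.sum_congr rfl fun N _ =>
      pd_mul ((Sm_rho ρ hρs hsc N A).diffAt x) ((Sm_W ρ hρs hsc N B C).diffAt x) M
  have split : (∑ M, ρ x M a * pd (fun y => Omf ρ A B C y) M x)
      = (∑ M, ∑ N, ρ x M a * (pd (fun y => ρ y N A) M x * Wf ρ N B C x))
      + (∑ M, ∑ N, ρ x M a * (ρ x N A * pd (fun y => Wf ρ N B C y) M x)) := by
    rw [← Finset.sum_add_distrib]
    refine Finset.sum_congr rfl fun M _ => ?_
    rw [hpdOm M, Finset.mul_sum, ← Finset.sum_add_distrib]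
    exact Finset.sum_congr rfl fun N _ => by ring
  rw [split]
  -- X1 = Pm a A B C
  have hX1 : (∑ M, ∑ N, ρ x M a * (pd (fun y => ρ y N A) M x * Wf ρ N B C x))
      = Pm ρ x a A B C := by
    have h1 : ∀ M N : DIdx d, ρ x M a * (pd (fun y => ρ y N A) M x * Wf ρ N B C x)
        = ∑ E, (ρ x M a * Wf ρ M A E x) * (ρ x N (Sum.swap E) * Wf ρ N B C x) := by
      intro M N
      rw [pdrho_eq ρ hη x N A M, Finset.sum_mul, Finset.mul_sum]
      exact Finset.sum_congr rfl fun E _ => by ring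
    simp only [h1]
    have h2 : ∀ M : DIdx d,
        (∑ N, ∑ E, (ρ x M a * Wf ρ M A E x) * (ρ x N (Sum.swap E) * Wf ρ N B C x))
        = ∑ E, (ρ x M a * Wf ρ M A E x) * Omf ρ (Sum.swap E) B C x := by
      intro M
      rw [Finset.sum_comm]
      refine Finset.sum_congr rfl fun E _ => ?_
      rw [← Finset.mul_sum, Omf]
    simp only [h2]
    rw [Finset.sum_comm, Pm_def]
    refine Finset.sum_congr rfl fun E _ => ?_
    rw [← Finset.sum_mul]
    rfl
  rw [hX1]
  -- X2 = S2 + Qm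
  have hpdW : ∀ N M : DIdx d, pd (fun y => Wf ρ N B C y) M x
      = ∑ L, (pd (fun y => pd (fun z => ρ z L B) N y) M x * ρ x (Sum.swap L) C
            + pd (fun z => ρ z L B) N x * pd (fun y => ρ y (Sum.swap L) C) M x) := by
    intro N M
    rw [show (fun y => Wf ρ N B C y)
        = fun y => ∑ L, pd (fun z => ρ z L B) N y * ρ y (Sum.swap L) C from rfl]
    rw [pd_sum _ _ (fun L _ => (((Sm_rho ρ hρs hsc L B).pd N).mul
        (Sm_rho ρ hρs hsc (Sum.swap L) C)).diffAt x) M]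
    exact Finset.sum_congr rfl fun L _ => pd_mul (((Sm_rho ρ hρs hsc L B).pd N).diffAt x)
      ((Sm_rho ρ hρs hsc (Sum.swap L) C).diffAt x) M
  have hX2 : (∑ M, ∑ N, ρ x M a * (ρ x N A * pd (fun y => Wf ρ N B C y) M x))
      = S2 ρ x a A B C
      + (∑ M, ∑ N, ∑ L, (ρ x M a * ρ x N A) *
          (pd (fun z => ρ z L B) N x * pd (fun y => ρ y (Sum.swap L) C) M x)) := by
    rw [S2_def, ← Finset.sum_add_distrib]
    refine Finset.sum_congr rfl fun M _ => ?_
    rw [← Finset.sum_add_distrib]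
    refine Finset.sum_congr rfl fun N _ => ?_
    rw [hpdW N M, Finset.mul_sum, Finset.mul_sum, ← Finset.sum_add_distrib]
    exact Finset.sum_congr rfl fun L _ => by ring
  rw [hX2]
  -- G-part = Qm A B a C
  have hG : (∑ M, ∑ N, ∑ L, (ρ x M a * ρ x N A) *
        (pd (fun z => ρ z L B) N x * pd (fun y => ρ y (Sum.swap L) C) M x))
      = Qm ρ x A B a C := by
    have h1 : ∀ M N : DIdx d, (∑ L, (ρ x M a * ρ x N A) *
        (pd (fun z => ρ z L B) N x * pd (fun y => ρ y (Sum.swap L) C) M x))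
        = ∑ E, (ρ x N A * Wf ρ N B E x) * (ρ x M a * Wf ρ M C (Sum.swap E) x) := by
      intro M N
      rw [← Finset.mul_sum, pdpd ρ x hη B C M N, Finset.mul_sum]
      exact Finset.sum_congr rfl fun E _ => by ring
    simp only [h1]
    have h2 : ∀ M : DIdx d, (∑ N, ∑ E, (ρ x N A * Wf ρ N B E x) *
        (ρ x M a * Wf ρ M C (Sum.swap E) x))
        = ∑ E, Omf ρ A B E x * (ρ x M a * Wf ρ M C (Sum.swap E) x) := by
      intro M
      rw [Finset.sum_comm]
      refine Finset.sum_congr rfl fun E _ => ?_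
      rw [← Finset.sum_mul]
      rfl
    simp only [h2]
    rw [Finset.sum_comm, Qm_def]
    refine Finset.sum_congr rfl fun E _ => ?_
    rw [← Finset.mul_sum]
    rfl
  rw [hG]
  ring

include hρs in
lemma S2_symm (a b c e : DIdx d) : S2 ρ x a b c e = S2 ρ x b a c e := by
  rw [S2_def, S2_def, Finset.sum_comm]
  refine Finset.sum_congr rfl fun M _ => Finset.sum_congr rfl fun N _ =>
    Finset.sum_congr rfl fun L _ => ?_
  rw [pd_comm (hρs L c) N M]
  ring

include hρs hη hsc in
/-- expansion of the derivative term `D_a T_{bce}` -/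
lemma DT_eq (a b c e : DIdx d) :
    (∑ M, ρ x M a * pd (fun y => dftFlux ρ b c e y) M x)
      = Pm ρ x a b c e + S2 ρ x a b c e + Qm ρ x b c a e
      + Pm ρ x a c e b + S2 ρ x a c e b + Qm ρ x c e a b
      + Pm ρ x a e b c + S2 ρ x a e b c + Qm ρ x e b a c := by
  have hfun : (fun y => dftFlux ρ b c e y)
      = fun y => Omf ρ b c e y + (Omf ρ c e b y + Omf ρ e b c y) := by
    funext y
    rw [flux_eq ρ hρs hη hsc y b c e]
    ring
  have hsplit : ∀ M : DIdx d, ρ x M a * pd (fun y => dftFlux ρ b c e y) M x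
      = ρ x M a * pd (fun y => Omf ρ b c e y) M x
      + (ρ x M a * pd (fun y => Omf ρ c e b y) M x
        + ρ x M a * pd (fun y => Omf ρ e b c y) M x) := by
    intro M
    rw [hfun, pd_add ((Sm_Om ρ hρs hsc b c e).diffAt x)
        (((Sm_Om ρ hρs hsc c e b).add (Sm_Om ρ hρs hsc e b c)).diffAt x) M,
      pd_add ((Sm_Om ρ hρs hsc c e b).diffAt x) ((Sm_Om ρ hρs hsc e b c).diffAt x) M]
    ring
  simp only [hsplit]
  simp only [Finset.sum_add_distrib]
  rw [DOm ρ x hρs hη hsc a b c e, DOm ρ x hρs hη hsc a c e b, DOm ρ x hρs hη hsc a e b c]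
  ring

end S11

namespace S11

variable {α : Type*}

lemma pat2301 (G : α → α → α → α → ℝ) (a b c e : α) :
    asym4 (fun p q r s => G r s p q) a b c e = asym4 G a b c e := by
  calc asym4 (fun p q r s => G r s p q) a b c e
      = ((Equiv.Perm.sign (⟨![2,3,0,1], ![2,3,0,1], by decide, by decide⟩ : Equiv.Perm (Fin 4)) : ℤ) : ℝ) * asym4 G a b c e :=
        asym4_pattern G (⟨![2,3,0,1], ![2,3,0,1], by decide, by decide⟩ : Equiv.Perm (Fin 4)) a b c e
    _ = asym4 G a b c e := by
        rw [show Equiv.Perm.sign (⟨![2,3,0,1], ![2,3,0,1], by decide, by decide⟩ : Equiv.Perm (Fin 4)) = 1 from by decide]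
        norm_num

lemma pat3201 (G : α → α → α → α → ℝ) (a b c e : α) :
    asym4 (fun p q r s => G s r p q) a b c e = - asym4 G a b c e := by
  calc asym4 (fun p q r s => G s r p q) a b c e
      = ((Equiv.Perm.sign (⟨![3,2,0,1], ![2,3,1,0], by decide, by decide⟩ : Equiv.Perm (Fin 4)) : ℤ) : ℝ) * asym4 G a b c e :=
        asym4_pattern G (⟨![3,2,0,1], ![2,3,1,0], by decide, by decide⟩ : Equiv.Perm (Fin 4)) a b c e
    _ = - asym4 G a b c e := by
        rw [show Equiv.Perm.sign (⟨![3,2,0,1], ![2,3,1,0], by decide, by decide⟩ : Equiv.Perm (Fin 4)) = -1 from by decide]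
        norm_num

lemma pat0132 (G : α → α → α → α → ℝ) (a b c e : α) :
    asym4 (fun p q r s => G p q s r) a b c e = - asym4 G a b c e := by
  calc asym4 (fun p q r s => G p q s r) a b c e
      = ((Equiv.Perm.sign (⟨![0,1,3,2], ![0,1,3,2], by decide, by decide⟩ : Equiv.Perm (Fin 4)) : ℤ) : ℝ) * asym4 G a b c e :=
        asym4_pattern G (⟨![0,1,3,2], ![0,1,3,2], by decide, by decide⟩ : Equiv.Perm (Fin 4)) a b c e
    _ = - asym4 G a b c e := by
        rw [show Equiv.Perm.sign (⟨![0,1,3,2], ![0,1,3,2], by decide, by decide⟩ : Equiv.Perm (Fin 4)) = -1 from by decide]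
        norm_num

lemma pat1023 (G : α → α → α → α → ℝ) (a b c e : α) :
    asym4 (fun p q r s => G q p r s) a b c e = - asym4 G a b c e := by
  calc asym4 (fun p q r s => G q p r s) a b c e
      = ((Equiv.Perm.sign (⟨![1,0,2,3], ![1,0,2,3], by decide, by decide⟩ : Equiv.Perm (Fin 4)) : ℤ) : ℝ) * asym4 G a b c e :=
        asym4_pattern G (⟨![1,0,2,3], ![1,0,2,3], by decide, by decide⟩ : Equiv.Perm (Fin 4)) a b c e
    _ = - asym4 G a b c e := by
        rw [show Equiv.Perm.sign (⟨![1,0,2,3], ![1,0,2,3], by decide, by decide⟩ : Equiv.Perm (Fin 4)) = -1 from by decide]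
        norm_num

lemma pat1032 (G : α → α → α → α → ℝ) (a b c e : α) :
    asym4 (fun p q r s => G q p s r) a b c e = asym4 G a b c e := by
  calc asym4 (fun p q r s => G q p s r) a b c e
      = ((Equiv.Perm.sign (⟨![1,0,3,2], ![1,0,3,2], by decide, by decide⟩ : Equiv.Perm (Fin 4)) : ℤ) : ℝ) * asym4 G a b c e :=
        asym4_pattern G (⟨![1,0,3,2], ![1,0,3,2], by decide, by decide⟩ : Equiv.Perm (Fin 4)) a b c e
    _ = asym4 G a b c e := by
        rw [show Equiv.Perm.sign (⟨![1,0,3,2], ![1,0,3,2], by decide, by decide⟩ : Equiv.Perm (Fin 4)) = 1 from by decide]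
        norm_num

lemma pat0231 (G : α → α → α → α → ℝ) (a b c e : α) :
    asym4 (fun p q r s => G p r s q) a b c e = asym4 G a b c e := by
  calc asym4 (fun p q r s => G p r s q) a b c e
      = ((Equiv.Perm.sign (⟨![0,2,3,1], ![0,3,1,2], by decide, by decide⟩ : Equiv.Perm (Fin 4)) : ℤ) : ℝ) * asym4 G a b c e :=
        asym4_pattern G (⟨![0,2,3,1], ![0,3,1,2], by decide, by decide⟩ : Equiv.Perm (Fin 4)) a b c e
    _ = asym4 G a b c e := by
        rw [show Equiv.Perm.sign (⟨![0,2,3,1], ![0,3,1,2], by decide, by decide⟩ : Equiv.Perm (Fin 4)) = 1 from by decide]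
        norm_num

lemma pat0312 (G : α → α → α → α → ℝ) (a b c e : α) :
    asym4 (fun p q r s => G p s q r) a b c e = asym4 G a b c e := by
  calc asym4 (fun p q r s => G p s q r) a b c e
      = ((Equiv.Perm.sign (⟨![0,3,1,2], ![0,2,3,1], by decide, by decide⟩ : Equiv.Perm (Fin 4)) : ℤ) : ℝ) * asym4 G a b c e :=
        asym4_pattern G (⟨![0,3,1,2], ![0,2,3,1], by decide, by decide⟩ : Equiv.Perm (Fin 4)) a b c e
    _ = asym4 G a b c e := by
        rw [show Equiv.Perm.sign (⟨![0,3,1,2], ![0,2,3,1], by decide, by decide⟩ : Equiv.Perm (Fin 4)) = 1 from by decide]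
        norm_num

lemma pat1203 (G : α → α → α → α → ℝ) (a b c e : α) :
    asym4 (fun p q r s => G q r p s) a b c e = asym4 G a b c e := by
  calc asym4 (fun p q r s => G q r p s) a b c e
      = ((Equiv.Perm.sign (⟨![1,2,0,3], ![2,0,1,3], by decide, by decide⟩ : Equiv.Perm (Fin 4)) : ℤ) : ℝ) * asym4 G a b c e :=
        asym4_pattern G (⟨![1,2,0,3], ![2,0,1,3], by decide, by decide⟩ : Equiv.Perm (Fin 4)) a b c e
    _ = asym4 G a b c e := by
        rw [show Equiv.Perm.sign (⟨![1,2,0,3], ![2,0,1,3], by decide, by decide⟩ : Equiv.Perm (Fin 4)) = 1 from by decide]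
        norm_num

lemma pat3102 (G : α → α → α → α → ℝ) (a b c e : α) :
    asym4 (fun p q r s => G s q p r) a b c e = asym4 G a b c e := by
  calc asym4 (fun p q r s => G s q p r) a b c e
      = ((Equiv.Perm.sign (⟨![3,1,0,2], ![2,1,3,0], by decide, by decide⟩ : Equiv.Perm (Fin 4)) : ℤ) : ℝ) * asym4 G a b c e :=
        asym4_pattern G (⟨![3,1,0,2], ![2,1,3,0], by decide, by decide⟩ : Equiv.Perm (Fin 4)) a b c e
    _ = asym4 G a b c e := by
        rw [show Equiv.Perm.sign (⟨![3,1,0,2], ![2,1,3,0], by decide, by decide⟩ : Equiv.Perm (Fin 4)) = 1 from by decide]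
        norm_num

end S11

/-- For a smooth `O(d,d)`-valued anchor `ρ` depending only on the first
`d` coordinates (a solution of the strong constraint `∂̃^i = 0`), the DFT fluxes `T̂`
satisfy the Bianchi identities
`3 η^{MN} T̂_{M[JK} T̂_{IL]N} + 4 ρ^M{}_{[I} ∂_M T̂_{KJL]} = 0`. -/
theorem statement11 {d : ℕ} (ρ : DSpace d → DIdx d → DIdx d → ℝ)
    (hρs : ∀ K J : DIdx d, ContDiff ℝ (⊤ : ℕ∞) fun x => ρ x K J)
    (hη : ∀ (x : DSpace d) (K L : DIdx d),
      ∑ I, ∑ J, ρ x K I * eta I J * ρ x L J = eta K L)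
    (hsc : ∀ x y : DSpace d, (∀ i : Fin d, x (Sum.inl i) = y (Sum.inl i)) → ρ x = ρ y)
    (x : DSpace d) (I J K L : DIdx d) :
    3 * asym4 (fun a b c e => ∑ M, ∑ N, eta M N * dftFlux ρ M a b x * dftFlux ρ c e N x)
        J K I L
      + 4 * asym4 (fun a b c e => ∑ M, ρ x M a * pd (fun y => dftFlux ρ b c e y) M x)
        I K J L = 0 := by
  classical
  have hswap : asym4 (fun a b c e => ∑ M, ∑ N, eta M N * dftFlux ρ M a b x * dftFlux ρ c e N x)
        J K I L
      = - asym4 (fun a b c e => ∑ M, ∑ N, eta M N * dftFlux ρ M a b x * dftFlux ρ c e N x)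
        I K J L := by
    calc asym4 (fun a b c e => ∑ M, ∑ N, eta M N * dftFlux ρ M a b x * dftFlux ρ c e N x)
          J K I L
        = ((Equiv.Perm.sign (⟨![2,1,0,3], ![2,1,0,3], by decide, by decide⟩ :
              Equiv.Perm (Fin 4)) : ℤ) : ℝ) *
            asym4 (fun a b c e => ∑ M, ∑ N, eta M N * dftFlux ρ M a b x * dftFlux ρ c e N x)
              I K J L :=
          S11.asym4_points _ (⟨![2,1,0,3], ![2,1,0,3], by decide, by decide⟩ :
            Equiv.Perm (Fin 4)) ![I,K,J,L]
      _ = - asym4 (fun a b c e => ∑ M, ∑ N, eta M N * dftFlux ρ M a b x * dftFlux ρ c e N x)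
            I K J L := by
          rw [show Equiv.Perm.sign (⟨![2,1,0,3], ![2,1,0,3], by decide, by decide⟩ :
            Equiv.Perm (Fin 4)) = -1 from by decide]
          norm_num
  rw [hswap]
  have hG1 : (fun a b c e => ∑ M, ∑ N, eta M N * dftFlux ρ M a b x * dftFlux ρ c e N x)
      = fun a b c e => S11.Pm ρ x c e a b - S11.Pm ρ x e c a b + S11.Qm ρ x a b c e
          - S11.Qm ρ x a b e c + S11.Pm ρ x a b c e - S11.Qm ρ x b a c e
          + S11.Qm ρ x b a e c - S11.Pm ρ x b a c e := by
    funext a b c e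
    exact S11.F1_eq ρ x hρs hη hsc a b c e
  have hG2 : (fun a b c e => ∑ M, ρ x M a * pd (fun y => dftFlux ρ b c e y) M x)
      = fun a b c e => S11.Pm ρ x a b c e + S11.S2 ρ x a b c e + S11.Qm ρ x b c a e
          + S11.Pm ρ x a c e b + S11.S2 ρ x a c e b + S11.Qm ρ x c e a b
          + S11.Pm ρ x a e b c + S11.S2 ρ x a e b c + S11.Qm ρ x e b a c := by
    funext a b c e
    exact S11.DT_eq ρ x hρs hη hsc a b c e
  rw [hG1, hG2]
  simp only [S11.asym4_sub, S11.asym4_add]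
  have idP : asym4 (fun a b c e => S11.Pm ρ x a b c e) I K J L
      = asym4 (S11.Pm ρ x) I K J L := rfl
  have idQ : asym4 (fun a b c e => S11.Qm ρ x a b c e) I K J L
      = asym4 (S11.Qm ρ x) I K J L := rfl
  have idS : asym4 (fun a b c e => S11.S2 ρ x a b c e) I K J L
      = asym4 (S11.S2 ρ x) I K J L := rfl
  have hz : asym4 (S11.S2 ρ x) I K J L = 0 :=
    S11.asym4_symm_zero (S11.S2 ρ x) (fun p q r s => S11.S2_symm ρ x hρs p q r s) I K J L
  have eA1 : asym4 (fun a b c e => S11.Pm ρ x c e a b) I K J L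
      = asym4 (S11.Pm ρ x) I K J L := S11.pat2301 (S11.Pm ρ x) I K J L
  have eA2 : asym4 (fun a b c e => S11.Pm ρ x e c a b) I K J L
      = - asym4 (S11.Pm ρ x) I K J L := S11.pat3201 (S11.Pm ρ x) I K J L
  have eA4 : asym4 (fun a b c e => S11.Qm ρ x a b e c) I K J L
      = - asym4 (S11.Qm ρ x) I K J L := S11.pat0132 (S11.Qm ρ x) I K J L
  have eA6 : asym4 (fun a b c e => S11.Qm ρ x b a c e) I K J L
      = - asym4 (S11.Qm ρ x) I K J L := S11.pat1023 (S11.Qm ρ x) I K J L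
  have eA7 : asym4 (fun a b c e => S11.Qm ρ x b a e c) I K J L
      = asym4 (S11.Qm ρ x) I K J L := S11.pat1032 (S11.Qm ρ x) I K J L
  have eA8 : asym4 (fun a b c e => S11.Pm ρ x b a c e) I K J L
      = - asym4 (S11.Pm ρ x) I K J L := S11.pat1023 (S11.Pm ρ x) I K J L
  have eB3 : asym4 (fun a b c e => S11.Qm ρ x b c a e) I K J L
      = asym4 (S11.Qm ρ x) I K J L := S11.pat1203 (S11.Qm ρ x) I K J L
  have eB4 : asym4 (fun a b c e => S11.Pm ρ x a c e b) I K J L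
      = asym4 (S11.Pm ρ x) I K J L := S11.pat0231 (S11.Pm ρ x) I K J L
  have eB5 : asym4 (fun a b c e => S11.S2 ρ x a c e b) I K J L
      = asym4 (S11.S2 ρ x) I K J L := S11.pat0231 (S11.S2 ρ x) I K J L
  have eB6 : asym4 (fun a b c e => S11.Qm ρ x c e a b) I K J L
      = asym4 (S11.Qm ρ x) I K J L := S11.pat2301 (S11.Qm ρ x) I K J L
  have eB7 : asym4 (fun a b c e => S11.Pm ρ x a e b c) I K J L
      = asym4 (S11.Pm ρ x) I K J L := S11.pat0312 (S11.Pm ρ x) I K J L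
  have eB8 : asym4 (fun a b c e => S11.S2 ρ x a e b c) I K J L
      = asym4 (S11.S2 ρ x) I K J L := S11.pat0312 (S11.S2 ρ x) I K J L
  have eB9 : asym4 (fun a b c e => S11.Qm ρ x e b a c) I K J L
      = asym4 (S11.Qm ρ x) I K J L := S11.pat3102 (S11.Qm ρ x) I K J L
  rw [eA1, eA2, eA4, eA6, eA7, eA8, eB3, eB4, eB5, eB6, eB7, eB8, eB9, idP, idQ, idS, hz]
  ring
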